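/- arXiv:1211.4305 — 3 statements merged into one kernel-verified Lean document; each statement's English description precedes it below -/
import Mathlib

section
/- For u < w in a Coxeter group, the following are equivalent: (1) R_{uw}(q) = (q−1)^{ℓ(u,w)}; (2) a(u,w) = ℓ(u,w), i.e., the minimal directed-path length from u to w in the Bruhat graph equals ℓ(w)−ℓ(u). -/
open Polynomial

lemma xsub1_not_unit : ¬ IsUnit ((X : Polynomial ℤ) - 1) := by
  intro h
  have := natDegree_eq_zero_of_isUnit h
  have : ((X : Polynomial ℤ) - 1).natDegree = 1 := by
    simpa using natDegree_X_sub_C (1 : ℤ)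
  omega

/-- For `u < w`, using that the R-polynomial `f = R_{uw}` is monic of degree `ℓ = ℓ(u,w)`,
has nonnegative `(q-1)`-expansion coefficients, and is exactly divisible by `(q-1)^a`
where `a = a(u,w)`, the following are equivalent: `R_{uw} = (q-1)^{ℓ(u,w)}` and
`a(u,w) = ℓ(u,w)`. -/
theorem rpoly_eq_pow_iff_absolute_length_eq (f : Polynomial ℤ) (a ℓ : ℕ)
    (hmonic : f.Monic) (hdeg : f.natDegree = ℓ)
    (htaylor : ∀ n : ℕ, 0 ≤ (Polynomial.taylor 1 f).coeff n)
    (hdvd : (X - 1) ^ a ∣ f) (hndvd : ¬ (X - 1) ^ (a + 1) ∣ f) :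
    f = (X - 1) ^ ℓ ↔ a = ℓ := by
  constructor
  · intro hf
    subst hf
    have hd1 : ((X : Polynomial ℤ) - 1).natDegree = 1 := by
      simpa using natDegree_X_sub_C (1 : ℤ)
    have h1 : a ≤ ℓ := by
      have := Polynomial.natDegree_le_of_dvd hdvd (by
        exact pow_ne_zero _ (monic_X_sub_C (1:ℤ) |>.ne_zero))
      rwa [natDegree_pow, natDegree_pow, hd1, mul_one, mul_one] at this
    have h2 : ¬ a + 1 ≤ ℓ := fun h => hndvd (pow_dvd_pow _ h)
    omega
  · intro ha
    subst ha
    obtain ⟨g, hg⟩ := hdvd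
    have hx : ((X : Polynomial ℤ) - 1).Monic := monic_X_sub_C 1
    have hxp : ((X : Polynomial ℤ) - 1) ^ a |>.Monic := hx.pow a
    have hg0 : g ≠ 0 := by
      rintro rfl
      exact hmonic.ne_zero (by simpa using hg)
    have hdg : g.natDegree = 0 := by
      have := hg ▸ hdeg
      have hd1 : ((X : Polynomial ℤ) - 1).natDegree = 1 := by
        simpa using natDegree_X_sub_C (1 : ℤ)
      rw [natDegree_mul hxp.ne_zero hg0, natDegree_pow, hd1] at this
      omega
    have hgm : g.Monic := by
      have := hmonic
      rw [hg] at this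
      exact hxp.of_mul_monic_left this
    have : g = 1 := hgm.natDegree_eq_zero.mp hdg
    rw [hg, this, mul_one]
end

section
/- Suppose for all pairs x ≤ v in a (crystallographic) Coxeter group, R_{xv}(1) = δ_{xv}, R'_{xv}(1) = 1 if x → v and 0 otherwise, and the alternating-sum identity Σ_{u ≤ v ≤ w} (−1)^{ℓ(u,v)} R_{uv}(q) R_{vw}(q) = δ_{uw} holds. If u →→ w (i.e., u < w and a(u,w) = 2), then R''_{uw}(1) = m(u,w), where m(u,w) = |{v ∈ [u,w] : u → v → w}|. -/
open Polynomial
open scoped Classical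

/-- Reflections of a Coxeter-like system: conjugates of elements of `S`. -/
def CoxReflections {W : Type*} [Group W] (S : Set W) : Set W :=
  {t | ∃ s ∈ S, ∃ g : W, t = g⁻¹ * s * g}

/-- Bruhat graph edge: `v = x t` for a reflection `t`, with `ℓ x < ℓ v`. -/
def BruhatEdge {W : Type*} [Group W] (S : Set W) (ℓ : W → ℕ) (x v : W) : Prop :=
  (∃ t ∈ CoxReflections S, v = x * t) ∧ ℓ x < ℓ v

/-!
Differentiate the alternating-sum identity `∑ (-1)^{ℓ(y)-ℓ(x)} R_{xy} R_{yv} = δ_{xv}` at `q = 1`,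
where `R_{xy}(1) = δ_{xy}`. Once, only the two endpoint terms survive:
`(1 + (-1)^{ℓ(v)-ℓ(x)}) R'_{xv}(1) = 0`, so `ℓ(v) - ℓ(x)` is odd along every edge `x → v`.
Twice, we get `(1 + (-1)^{ℓ(w)-ℓ(u)}) R''_{uw}(1) + 2 ∑_y (-1)^{ℓ(y)-ℓ(u)} R'_{uy}(1) R'_{yw}(1) = 0`.
A path `u → v → w` makes the first sign `+1`, and the middle sum counts `-1` for every `y` with
`u → y → w` and `0` otherwise, so `2 R''_{uw}(1) = 2 m(u,w)`.
-/

section Derivative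
variable {A : Type*} [CommRing A]

lemma derivative_neg_one_pow_mul (n : ℕ) (p : A[X]) :
    derivative ((-1) ^ n * p) = (-1) ^ n * derivative p := by
  simp [derivative_mul, derivative_pow]

lemma derivative_derivative_mul (p q : A[X]) :
    derivative (derivative (p * q)) =
      derivative (derivative p) * q + 2 * (derivative p * derivative q)
        + p * derivative (derivative q) := by
  simp only [derivative_mul, derivative_add]
  ring

end Derivative

section AlternatingSum
variable {P : Type*} [PartialOrder P] [LocallyFiniteOrder P] (ℓ : P → ℕ) (R : P → P → ℤ[X])

def AlternatingSumIdentity : Prop :=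
  ∀ u w : P, u ≤ w →
    ∑ v ∈ Finset.Icc u w, ((-1 : ℤ[X])) ^ (ℓ v - ℓ u) * (R u v * R v w) = if u = w then 1 else 0

lemma one_add_neg_one_pow_mul_eval_derivative_eq_zero
    (hR1 : ∀ x v : P, x ≤ v → (R x v).eval 1 = if x = v then 1 else 0)
    (halt : AlternatingSumIdentity ℓ R)
    {x v : P} (hxv : x < v) :
    (1 + (-1 : ℤ) ^ (ℓ v - ℓ x)) * (derivative (R x v)).eval 1 = 0 := by
  have H := congrArg (fun p => (derivative p).eval 1) (halt x v hxv.le)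
  simp only [hxv.ne, if_false, map_sum, derivative_neg_one_pow_mul] at H
  simp only [derivative_mul, derivative_zero, eval_finsetSum, eval_mul, eval_add, eval_pow,
    eval_neg, eval_one, eval_zero] at H
  rw [Finset.sum_congr rfl fun y hy => by
    rw [hR1 x y (Finset.mem_Icc.1 hy).1, hR1 y v (Finset.mem_Icc.1 hy).2]] at H
  simp only [mul_add, mul_ite, ite_mul, mul_one, mul_zero, one_mul, zero_mul,
    Finset.sum_add_distrib, Finset.sum_ite_eq, Finset.sum_ite_eq', Finset.mem_Icc, hxv.le,
    le_refl, and_self, if_true, tsub_self, pow_zero] at H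
  linear_combination H

lemma one_add_neg_one_pow_mul_eval_derivative_derivative_add_eq_zero
    (hR1 : ∀ x v : P, x ≤ v → (R x v).eval 1 = if x = v then 1 else 0)
    (halt : AlternatingSumIdentity ℓ R)
    {x v : P} (hxv : x < v) :
    (1 + (-1 : ℤ) ^ (ℓ v - ℓ x)) * (derivative (derivative (R x v))).eval 1
      + 2 * ∑ y ∈ Finset.Icc x v, (-1 : ℤ) ^ (ℓ y - ℓ x) *
          ((derivative (R x y)).eval 1 * (derivative (R y v)).eval 1) = 0 := by
  have H := congrArg (fun p => (derivative (derivative p)).eval 1) (halt x v hxv.le)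
  simp only [hxv.ne, if_false, map_sum, derivative_neg_one_pow_mul, derivative_derivative_mul,
    derivative_zero, eval_finsetSum, eval_mul, eval_add, eval_pow, eval_neg, eval_one, eval_zero,
    eval_ofNat] at H
  rw [Finset.sum_congr rfl fun y hy => by
    rw [hR1 x y (Finset.mem_Icc.1 hy).1, hR1 y v (Finset.mem_Icc.1 hy).2]] at H
  simp only [mul_add, mul_ite, ite_mul, mul_one, mul_zero, one_mul, zero_mul,
    Finset.sum_add_distrib, Finset.sum_ite_eq, Finset.sum_ite_eq', Finset.mem_Icc, hxv.le,
    le_refl, and_self, if_true, tsub_self, pow_zero] at H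
  have hmiddle : ∑ y ∈ Finset.Icc x v, (-1 : ℤ) ^ (ℓ y - ℓ x) *
      (2 * ((derivative (R x y)).eval 1 * (derivative (R y v)).eval 1)) =
      2 * ∑ y ∈ Finset.Icc x v, (-1 : ℤ) ^ (ℓ y - ℓ x) *
        ((derivative (R x y)).eval 1 * (derivative (R y v)).eval 1) := by
    rw [Finset.mul_sum]
    exact Finset.sum_congr rfl fun _ _ => by ring
  linear_combination H - hmiddle

variable (E : P → P → Prop)

lemma neg_one_pow_eq_neg_one_of_edge
    (hE_lt : ∀ x v, E x v → x < v)
    (hR1 : ∀ x v : P, x ≤ v → (R x v).eval 1 = if x = v then 1 else 0)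
    (hR'1 : ∀ x v : P, x ≤ v → (derivative (R x v)).eval 1 = if E x v then 1 else 0)
    (halt : AlternatingSumIdentity ℓ R)
    {x v : P} (hxv : E x v) :
    (-1 : ℤ) ^ (ℓ v - ℓ x) = -1 := by
  have H := one_add_neg_one_pow_mul_eval_derivative_eq_zero ℓ R hR1 halt (hE_lt x v hxv)
  rw [hR'1 x v (hE_lt x v hxv).le, if_pos hxv] at H
  linear_combination H

lemma neg_one_pow_eq_one_of_edge_of_edge
    (hE_lt : ∀ x v, E x v → x < v) (hE_ℓ : ∀ x v, E x v → ℓ x < ℓ v)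
    (hR1 : ∀ x v : P, x ≤ v → (R x v).eval 1 = if x = v then 1 else 0)
    (hR'1 : ∀ x v : P, x ≤ v → (derivative (R x v)).eval 1 = if E x v then 1 else 0)
    (halt : AlternatingSumIdentity ℓ R)
    {u v w : P} (huv : E u v) (hvw : E v w) :
    (-1 : ℤ) ^ (ℓ w - ℓ u) = 1 := by
  have hℓ_split : ℓ w - ℓ u = (ℓ w - ℓ v) + (ℓ v - ℓ u) := by
    have := hE_ℓ u v huv
    have := hE_ℓ v w hvw
    omega
  rw [hℓ_split, pow_add, neg_one_pow_eq_neg_one_of_edge ℓ R E hE_lt hR1 hR'1 halt huv,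
    neg_one_pow_eq_neg_one_of_edge ℓ R E hE_lt hR1 hR'1 halt hvw]
  norm_num

lemma eval_derivative_derivative_eq_card_filter
    (hE_lt : ∀ x v, E x v → x < v)
    (hR1 : ∀ x v : P, x ≤ v → (R x v).eval 1 = if x = v then 1 else 0)
    (hR'1 : ∀ x v : P, x ≤ v → (derivative (R x v)).eval 1 = if E x v then 1 else 0)
    (halt : AlternatingSumIdentity ℓ R)
    {u w : P} (huw : u < w) (hsign : (-1 : ℤ) ^ (ℓ w - ℓ u) = 1) :
    (derivative (derivative (R u w))).eval 1
      = (((Finset.Icc u w).filter (fun v => E u v ∧ E v w)).card : ℤ) := by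
  have hterm : ∀ y ∈ Finset.Icc u w, (-1 : ℤ) ^ (ℓ y - ℓ u) *
      ((derivative (R u y)).eval 1 * (derivative (R y w)).eval 1) =
      -(if E u y ∧ E y w then 1 else 0) := by
    intro y hy
    rw [hR'1 u y (Finset.mem_Icc.1 hy).1, hR'1 y w (Finset.mem_Icc.1 hy).2]
    by_cases hpath : E u y ∧ E y w
    · rw [if_pos hpath.1, if_pos hpath.2, if_pos hpath,
        neg_one_pow_eq_neg_one_of_edge ℓ R E hE_lt hR1 hR'1 halt hpath.1]
      ring
    · rw [if_neg hpath]
      rcases not_and_or.1 hpath with h | h <;> simp [h]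
  have H := one_add_neg_one_pow_mul_eval_derivative_derivative_add_eq_zero ℓ R hR1 halt huw
  rw [Finset.sum_congr rfl hterm, hsign, Finset.sum_neg_distrib, Finset.sum_boole] at H
  linarith

end AlternatingSum

theorem second_derivative_eq_m_general {W : Type*} [Group W] [PartialOrder W]
    [LocallyFiniteOrder W] (S : Set W) (ℓ : W → ℕ) (R : W → W → Polynomial ℤ)
    (hedge_lt : ∀ x v : W, BruhatEdge S ℓ x v → x < v)
    (hR1 : ∀ x v : W, x ≤ v → (R x v).eval 1 = if x = v then 1 else 0)
    (hR'1 : ∀ x v : W, x ≤ v →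
      (BruhatEdge S ℓ x v → (Polynomial.derivative (R x v)).eval 1 = 1) ∧
      (¬ BruhatEdge S ℓ x v → (Polynomial.derivative (R x v)).eval 1 = 0))
    (halt : ∀ u w : W, u ≤ w →
      ∑ v ∈ Finset.Icc u w, ((-1 : Polynomial ℤ)) ^ (ℓ v - ℓ u) * (R u v * R v w)
        = if u = w then 1 else 0)
    (u w : W) (huw : u < w)
    (hpath2 : ∃ v : W, BruhatEdge S ℓ u v ∧ BruhatEdge S ℓ v w) :
    (Polynomial.derivative (Polynomial.derivative (R u w))).eval 1
      = (((Finset.Icc u w).filter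
          (fun v => BruhatEdge S ℓ u v ∧ BruhatEdge S ℓ v w)).card : ℤ) := by
  have hR'1_ite : ∀ x v : W, x ≤ v →
      (derivative (R x v)).eval 1 = if BruhatEdge S ℓ x v then 1 else 0 := by
    intro x v hxv
    split_ifs with hedge
    exacts [(hR'1 x v hxv).1 hedge, (hR'1 x v hxv).2 hedge]
  obtain ⟨v, huv, hvw⟩ := hpath2
  have hsign := neg_one_pow_eq_one_of_edge_of_edge ℓ R (BruhatEdge S ℓ) hedge_lt
    (fun _ _ hedge => hedge.2) hR1 hR'1_ite halt huv hvw
  exact eval_derivative_derivative_eq_card_filter ℓ R _ hedge_lt hR1 hR'1_ite halt huw hsign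

/-- If `R_{xv}(1) = δ_{xv}`, `R'_{xv}(1)` is the edge indicator, and the alternating-sum
identity `∑_{u ≤ v ≤ w} (-1)^{ℓ(u,v)} R_{uv} R_{vw} = δ_{uw}` holds, then for `u →→ w`
(i.e. `u < w` with absolute length 2) one has `R''_{uw}(1) = m(u,w)`, the number of
`v ∈ [u,w]` with `u → v → w`. -/
theorem second_derivative_eq_m {W : Type*} [Group W] [PartialOrder W]
    [LocallyFiniteOrder W] (S : Set W) (ℓ : W → ℕ) (R : W → W → Polynomial ℤ)
    (hedge_lt : ∀ x v : W, BruhatEdge S ℓ x v → x < v)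
    (hR1 : ∀ x v : W, x ≤ v → (R x v).eval 1 = if x = v then 1 else 0)
    (hR'1 : ∀ x v : W, x ≤ v →
      (BruhatEdge S ℓ x v → (Polynomial.derivative (R x v)).eval 1 = 1) ∧
      (¬ BruhatEdge S ℓ x v → (Polynomial.derivative (R x v)).eval 1 = 0))
    (halt : ∀ u w : W, u ≤ w →
      ∑ v ∈ Finset.Icc u w, ((-1 : Polynomial ℤ)) ^ (ℓ v - ℓ u) * (R u v * R v w)
        = if u = w then 1 else 0)
    (u w : W) (huw : u < w) (hnotedge : ¬ BruhatEdge S ℓ u w)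
    (hpath2 : ∃ v : W, BruhatEdge S ℓ u v ∧ BruhatEdge S ℓ v w) :
    (Polynomial.derivative (Polynomial.derivative (R u w))).eval 1
      = (((Finset.Icc u w).filter
          (fun v => BruhatEdge S ℓ u v ∧ BruhatEdge S ℓ v w)).card : ℤ) :=
  second_derivative_eq_m_general S ℓ R hedge_lt hR1 hR'1 halt u w huw hpath2
end

section
/- Let W be a crystallographic Coxeter group and u ≤ w. Assume: (i) ℓ(u,w)·P_{uw}(1) − 2·P'_{uw}(1) = Σ_{v ∈ N̄(u,w)} P_{vw}(1); (ii) all coefficients of all Kazhdan–Lusztig polynomials P_{vw} are nonnegative; (iii) monotonicity: P_{uw}(1) ≥ P_{vw}(1) for all v ∈ N̄(u,w); (iv) Deodhar's inequality: |N̄(u,w)| ≥ ℓ(u,w). If P_{uw}(1) > 1, then the number n of v ∈ N̄(u,w) with P_{uw}(1) > P_{vw}(1) satisfies n ≥ df(u,w) + 1 ≥ 1; in particular there exists a reflection t with u < ut ≤ w and P_{uw}(1) > P_{ut,w}(1) > 0. -/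
open Polynomial
open scoped Classical

lemma coeff_zero_le_eval_one (p : ℤ[X]) (hp : ∀ n, 0 ≤ p.coeff n) :
    p.coeff 0 ≤ p.eval 1 := by
  have h1 : p.eval 1 = ∑ n ∈ p.support, p.coeff n := by
    rw [eval_eq_sum, Polynomial.sum]; simp
  rw [h1]
  by_cases h : 0 ∈ p.support
  · exact Finset.single_le_sum (fun i _ => hp i) h
  · rw [Polynomial.notMem_support_iff.mp h]
    exact Finset.sum_nonneg fun i _ => hp i

lemma eval_sub_coeff_le_deriv (p : ℤ[X]) (hp : ∀ n, 0 ≤ p.coeff n) :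
    p.eval 1 - p.coeff 0 ≤ (derivative p).eval 1 := by
  have h1 : p.eval 1 = ∑ n ∈ p.support, p.coeff n := by
    rw [eval_eq_sum, Polynomial.sum]; simp
  rw [derivative_eval, Polynomial.sum]
  simp only [one_pow, mul_one]
  have h2 : ∑ n ∈ p.support, p.coeff n * n
      = ∑ n ∈ p.support.erase 0, p.coeff n * n := by
    rw [Finset.sum_erase]; simp
  have h3 : ∑ n ∈ p.support.erase 0, (p.coeff n : ℤ)
      ≤ ∑ n ∈ p.support.erase 0, p.coeff n * (n : ℤ) := by
    refine Finset.sum_le_sum fun i hi => ?_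
    have hi1 : 1 ≤ (i : ℤ) := by
      have := Finset.ne_of_mem_erase hi
      omega
    nlinarith [hp i]
  rw [h1, h2]
  by_cases h : 0 ∈ p.support
  · rw [← Finset.add_sum_erase _ _ h]; linarith
  · rw [Finset.erase_eq_of_notMem h] at h3
    rw [Finset.erase_eq_of_notMem h, Polynomial.notMem_support_iff.mp h]; linarith

/-- If `P_{uw}(1) > 1`, then the number `n` of `v ∈ N̄(u,w)` with `P_{uw}(1) > P_{vw}(1)`
satisfies `n ≥ df(u,w) + 1 ≥ 1`; in particular there is a reflection `t` with
`u < ut ≤ w` and `P_{uw}(1) > P_{ut,w}(1) > 0`. -/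
theorem strict_edge_exists {W : Type*} [Group W] [PartialOrder W]
    [LocallyFiniteOrder W] (S : Set W) (ℓ : W → ℕ) (P : W → W → Polynomial ℤ)
    (hedge_lt : ∀ x v : W, BruhatEdge S ℓ x v → x < v)
    (u w : W) (huw : u ≤ w)
    (hident : ((ℓ w : ℤ) - (ℓ u : ℤ)) * (P u w).eval 1
        - 2 * (Polynomial.derivative (P u w)).eval 1
      = ∑ v ∈ (Finset.Icc u w).filter (fun v => BruhatEdge S ℓ u v), (P v w).eval 1)
    (hnonneg : ∀ u' w' : W, ∀ n : ℕ, 0 ≤ (P u' w').coeff n)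
    (hconst : ∀ v : W, u ≤ v → v ≤ w → (P v w).coeff 0 = 1)
    (hmono : ∀ v ∈ (Finset.Icc u w).filter (fun v => BruhatEdge S ℓ u v),
      (P v w).eval 1 ≤ (P u w).eval 1)
    (hdeodhar : (ℓ w : ℤ) - (ℓ u : ℤ)
      ≤ (((Finset.Icc u w).filter (fun v => BruhatEdge S ℓ u v)).card : ℤ))
    (hsing : 1 < (P u w).eval 1) :
    ((((Finset.Icc u w).filter (fun v => BruhatEdge S ℓ u v)).card : ℤ)
        - ((ℓ w : ℤ) - (ℓ u : ℤ)) + 1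
      ≤ ((((Finset.Icc u w).filter (fun v => BruhatEdge S ℓ u v)).filter
          (fun v => (P v w).eval 1 < (P u w).eval 1)).card : ℤ)) ∧
    (1 ≤ (((Finset.Icc u w).filter (fun v => BruhatEdge S ℓ u v)).filter
          (fun v => (P v w).eval 1 < (P u w).eval 1)).card) ∧
    (∃ t ∈ CoxReflections S, u < u * t ∧ u * t ≤ w ∧
      (P (u * t) w).eval 1 < (P u w).eval 1 ∧ 0 < (P (u * t) w).eval 1) := by
  classical
  set A := (Finset.Icc u w).filter (fun v => BruhatEdge S ℓ u v) with hA
  set B := A.filter (fun v => (P v w).eval 1 < (P u w).eval 1) with hB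
  set p := (P u w).eval 1 with hpdef
  set L := (ℓ w : ℤ) - (ℓ u : ℤ) with hL
  -- each element of A has P_v(1) ≥ 1
  have hone : ∀ v ∈ A, 1 ≤ (P v w).eval 1 := by
    intro v hv
    rw [hA, Finset.mem_filter, Finset.mem_Icc] at hv
    have := coeff_zero_le_eval_one (P v w) (hnonneg v w)
    rw [hconst v hv.1.1 hv.1.2] at this
    exact this
  -- derivative bound
  have hderiv : p - 1 ≤ (Polynomial.derivative (P u w)).eval 1 := by
    have := eval_sub_coeff_le_deriv (P u w) (hnonneg u w)
    rw [hconst u le_rfl huw] at this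
    exact this
  -- elements of A outside B have P_v(1) = p
  have hnotB : ∀ v ∈ A.filter (fun v => ¬ (P v w).eval 1 < p),
      (P v w).eval 1 = p := by
    intro v hv
    rw [Finset.mem_filter] at hv
    exact le_antisymm (hmono v hv.1) (not_lt.mp hv.2)
  -- split the sum
  have hsplit : (∑ v ∈ A, (P v w).eval 1)
      = (∑ v ∈ B, (P v w).eval 1) + ((A.card : ℤ) - B.card) * p := by
    have h1 := Finset.sum_filter_add_sum_filter_not A
      (fun v => (P v w).eval 1 < p) (fun v => (P v w).eval 1)
    have h2 : (∑ v ∈ A.filter (fun v => ¬ (P v w).eval 1 < p), (P v w).eval 1)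
        = ((A.filter (fun v => ¬ (P v w).eval 1 < p)).card : ℤ) * p := by
      rw [Finset.sum_congr rfl hnotB, Finset.sum_const, nsmul_eq_mul]
    have h3 := Finset.card_filter_add_card_filter_not
      (s := A) (p := fun v => (P v w).eval 1 < p)
    rw [← h1, h2, ← hB]
    have : ((A.filter (fun v => ¬ (P v w).eval 1 < p)).card : ℤ)
        = (A.card : ℤ) - B.card := by
      rw [hB]; push_cast [← h3]; ring
    rw [this]
  have hBsum : (B.card : ℤ) ≤ ∑ v ∈ B, (P v w).eval 1 := by
    calc (B.card : ℤ) = ∑ _v ∈ B, (1 : ℤ) := by simp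
    _ ≤ ∑ v ∈ B, (P v w).eval 1 :=
      Finset.sum_le_sum fun v hv => hone v (Finset.mem_of_mem_filter v hv)
  -- the main counting inequality
  have hmain : (A.card : ℤ) - L + 1 ≤ (B.card : ℤ) := by
    have hid : L * p - 2 * (Polynomial.derivative (P u w)).eval 1
        = ∑ v ∈ A, (P v w).eval 1 := hident
    rw [hsplit] at hid
    nlinarith [hdeodhar, hderiv, hBsum, hsing,
      mul_nonneg (sub_nonneg.mpr hdeodhar) (le_of_lt (lt_trans zero_lt_one hsing))]
  refine ⟨hmain, ?_, ?_⟩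
  · have : (1 : ℤ) ≤ (B.card : ℤ) := by linarith
    exact_mod_cast this
  · have hBne : B.Nonempty := by
      rw [← Finset.card_pos]
      have : (1 : ℤ) ≤ (B.card : ℤ) := by linarith
      exact_mod_cast this
    obtain ⟨v, hv⟩ := hBne
    rw [hB, Finset.mem_filter] at hv
    obtain ⟨hvA, hvlt⟩ := hv
    rw [hA, Finset.mem_filter, Finset.mem_Icc] at hvA
    obtain ⟨⟨huv, hvw⟩, hedge⟩ := hvA
    obtain ⟨⟨t, htR, htv⟩, hlen⟩ := hedge
    refine ⟨t, htR, ?_, ?_, ?_, ?_⟩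
    · rw [← htv]
      exact hedge_lt u v ⟨⟨t, htR, htv⟩, hlen⟩
    · rw [← htv]; exact hvw
    · rw [← htv]; exact hvlt
    · rw [← htv]
      have : 1 ≤ (P v w).eval 1 := by
        have := coeff_zero_le_eval_one (P v w) (hnonneg v w)
        rw [hconst v huv hvw] at this
        exact this
      linarith
end
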